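/- arXiv:1810.05468 — 3 statements merged into one kernel-verified Lean document; each statement's English description precedes it below -/
import Mathlib

section
/- The equation 5α³ - 56α² + 177α - 122 = 0 has exactly one root α_ν in the interval (0,1), and for α ∈ (0, α_ν] one has γ_{1/2}(α) ≤ γ_ν(α), while for α ∈ [α_ν, 1) one has γ_ν(α) ≤ γ_{1/2}(α). -/
/-!
Both sides are nonnegative on `(0, 1)`, so they compare as their squares do, and clearing
denominators gives
`γ_ν² - γ_{1/2}² = -3 (1-α)² (2-α) p(α) / (16 (5-α)² (α² - 6α + 17))`
with `p(α) = 5α³ - 56α² + 177α - 122`. Hence the comparison is decided by the sign of `p`.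
Since `p(0) < 0 < p(1)` and `p` is strictly increasing on `[0, 1]`, it has exactly one root `α_ν`
there, negative to its left and positive to its right.
-/

open Set

noncomputable section

namespace AlphaNu

def cubic (x : ℝ) : ℝ := 5 * x ^ 3 - 56 * x ^ 2 + 177 * x - 122

def gammaHalf (α : ℝ) : ℝ := (1 - α) * (2 - α) / (4 * (5 - α))

def gammaNu (α : ℝ) : ℝ := Real.sqrt ((1 - α) ^ 3 * (2 - α) / (α ^ 2 - 6 * α + 17))

theorem cubic_strictMonoOn : StrictMonoOn cubic (Icc 0 1) := by
  rintro x ⟨hx0, hx1⟩ y ⟨hy0, hy1⟩ hxy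
  have hslope : 0 < 5 * (x ^ 2 + x * y + y ^ 2) - 56 * (x + y) + 177 := by
    nlinarith [mul_nonneg hx0 hy0]
  have hdiff : cubic y - cubic x = (y - x) * (5 * (x ^ 2 + x * y + y ^ 2) - 56 * (x + y) + 177) := by
    unfold cubic; ring
  nlinarith [mul_pos (sub_pos.mpr hxy) hslope]

theorem exists_cubic_eq_zero : ∃ a ∈ Ioo (0 : ℝ) 1, cubic a = 0 := by
  have hcont : ContinuousOn cubic (Icc 0 1) := by unfold cubic; fun_prop
  exact intermediate_value_Ioo zero_le_one hcont (by norm_num [cubic])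

theorem quadratic_pos (α : ℝ) : 0 < α ^ 2 - 6 * α + 17 := by
  nlinarith [sq_nonneg (α - 3)]

theorem gammaHalf_nonneg {α : ℝ} (hα : α ≤ 1) : 0 ≤ gammaHalf α :=
  div_nonneg (mul_nonneg (by linarith) (by linarith)) (by linarith)

theorem radicand_sub_sq_gammaHalf {α : ℝ} (hα : α ≠ 5) :
    (1 - α) ^ 3 * (2 - α) / (α ^ 2 - 6 * α + 17) - gammaHalf α ^ 2 =
      -3 * cubic α * ((1 - α) ^ 2 * (2 - α) / (16 * (5 - α) ^ 2 * (α ^ 2 - 6 * α + 17))) := by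
  have h5 : 5 - α ≠ 0 := sub_ne_zero.mpr hα.symm
  have hq := (quadratic_pos α).ne'
  unfold gammaHalf cubic
  rw [div_pow, mul_div_assoc', div_sub_div _ _ hq (by positivity),
    div_eq_div_iff (by positivity) (by positivity)]
  ring

theorem comparison_weight_nonneg {α : ℝ} (hα : α ≤ 2) :
    0 ≤ (1 - α) ^ 2 * (2 - α) / (16 * (5 - α) ^ 2 * (α ^ 2 - 6 * α + 17)) :=
  div_nonneg (mul_nonneg (sq_nonneg _) (by linarith))
    (mul_nonneg (by positivity) (quadratic_pos α).le)

theorem gammaHalf_le_gammaNu {α : ℝ} (hα : α ≤ 1) (hp : cubic α ≤ 0) :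
    gammaHalf α ≤ gammaNu α := by
  rw [gammaNu, Real.le_sqrt (gammaHalf_nonneg hα)
    (div_nonneg (mul_nonneg (pow_nonneg (by linarith) 3) (by linarith)) (quadratic_pos α).le),
    ← sub_nonneg, radicand_sub_sq_gammaHalf (by linarith)]
  exact mul_nonneg (by linarith) (comparison_weight_nonneg (by linarith))

theorem gammaNu_le_gammaHalf {α : ℝ} (hα : α ≤ 1) (hp : 0 ≤ cubic α) :
    gammaNu α ≤ gammaHalf α := by
  rw [gammaNu, Real.sqrt_le_left (gammaHalf_nonneg hα), ← sub_nonpos,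
    radicand_sub_sq_gammaHalf (by linarith)]
  exact mul_nonpos_of_nonpos_of_nonneg (by linarith) (comparison_weight_nonneg (by linarith))

end AlphaNu

end

open AlphaNu in
theorem alpha_nu_unique_root_and_comparison :
    ∃ αν : ℝ, αν ∈ Set.Ioo (0 : ℝ) 1 ∧
      5 * αν ^ 3 - 56 * αν ^ 2 + 177 * αν - 122 = 0 ∧
      (∀ β ∈ Set.Ioo (0 : ℝ) 1, 5 * β ^ 3 - 56 * β ^ 2 + 177 * β - 122 = 0 → β = αν) ∧
      (∀ α : ℝ, 0 < α → α ≤ αν →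
        (1 - α) * (2 - α) / (4 * (5 - α)) ≤
          Real.sqrt ((1 - α) ^ 3 * (2 - α) / (α ^ 2 - 6 * α + 17))) ∧
      (∀ α : ℝ, αν ≤ α → α < 1 →
        Real.sqrt ((1 - α) ^ 3 * (2 - α) / (α ^ 2 - 6 * α + 17)) ≤
          (1 - α) * (2 - α) / (4 * (5 - α))) := by
  obtain ⟨αν, hν, hroot⟩ := exists_cubic_eq_zero
  have hνIcc : αν ∈ Icc (0 : ℝ) 1 := Ioo_subset_Icc_self hν
  refine ⟨αν, hν, hroot, ?_, ?_, ?_⟩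
  · intro β hβ hβroot
    exact cubic_strictMonoOn.injOn (Ioo_subset_Icc_self hβ) hνIcc (hβroot.trans hroot.symm)
  · intro α hα0 hαν
    have hα1 : α ≤ 1 := hαν.trans hν.2.le
    refine gammaHalf_le_gammaNu hα1 (hroot ▸ ?_)
    exact cubic_strictMonoOn.monotoneOn ⟨hα0.le, hα1⟩ hνIcc hαν
  · intro α hνα hα1
    refine gammaNu_le_gammaHalf hα1.le (hroot ▸ ?_)
    exact cubic_strictMonoOn.monotoneOn hνIcc ⟨hν.1.le.trans hνα, hα1.le⟩ hνα
end

section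
/- For all α with 0 < α < 2/π, one has γ_⋆(α) < 1 - α, where γ_⋆(α) = (2/π)·arctan(sqrt(2/(πα) - 1)) - α·sqrt(2/(πα) - 1). -/
/-!
Put `t = √(2/(πα) - 1)`, so that `πα/2 = 1/(1 + t²)`; multiplying by `π/2`, the claim becomes
`arctan t + (1 - t)/(1 + t²) < π/2`. With `v = π/2 - arctan t ∈ (0, π/2]` one has
`(1 - t)/(1 + t²) = sin v (sin v - cos v)`, and this is `≤ sin v < v` because `sin v - cos v ≤ 1`.
-/

open Real

lemma sin_mul_sin_sub_cos_lt_self {v : ℝ} (hv0 : 0 < v) (hv : v ≤ π / 2) :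
    sin v * (sin v - cos v) < v := by
  have hsin : 0 ≤ sin v := sin_nonneg_of_nonneg_of_le_pi hv0.le (by linarith [pi_pos])
  have hcos : 0 ≤ cos v := cos_nonneg_of_neg_pi_div_two_le_of_le (by linarith) hv
  calc sin v * (sin v - cos v) ≤ sin v * 1 := by
        gcongr
        linarith [sin_le_one v]
    _ = sin v := mul_one _
    _ < v := sin_lt hv0

lemma arctan_add_one_sub_div_lt_pi_div_two {t : ℝ} (ht : 0 ≤ t) :
    arctan t + (1 - t) / (1 + t ^ 2) < π / 2 := by
  have key := sin_mul_sin_sub_cos_lt_self (v := π / 2 - arctan t)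
    (by linarith [arctan_lt_pi_div_two t]) (by linarith [arctan_nonneg.2 ht])
  rw [sin_pi_div_two_sub, cos_pi_div_two_sub] at key
  have hsq : √(1 + t ^ 2) ^ 2 = 1 + t ^ 2 := sq_sqrt (by positivity)
  have hrational : cos (arctan t) * (cos (arctan t) - sin (arctan t)) = (1 - t) / (1 + t ^ 2) := by
    rw [cos_arctan, sin_arctan]
    field_simp
    rw [hsq]
  linarith

theorem gamma_star_lt (α : ℝ) (h0 : 0 < α) (h1 : α < 2 / Real.pi) :
    (2 / Real.pi) * Real.arctan (Real.sqrt (2 / (Real.pi * α) - 1)) -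
      α * Real.sqrt (2 / (Real.pi * α) - 1) < 1 - α := by
  have hpi := pi_pos
  set t := √(2 / (π * α) - 1)
  have ht : 1 + t ^ 2 = 2 / (π * α) := by
    have : 1 ≤ 2 / (π * α) := by
      rw [le_div_iff₀ (by positivity)]
      rw [lt_div_iff₀ hpi] at h1
      linarith
    rw [sq_sqrt (by linarith)]
    ring
  have key := arctan_add_one_sub_div_lt_pi_div_two (sqrt_nonneg (2 / (π * α) - 1))
  rw [ht, div_div_eq_mul_div] at key
  calc 2 / π * arctan t - α * t = 2 / π * (arctan t + (1 - t) * (π * α) / 2) - α := by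
        field_simp
        ring
    _ < 2 / π * (π / 2) - α := by gcongr
    _ = 1 - α := by field_simp
end

section
/- Let 0 < α < 1 and 0 < γ ≤ 1, and suppose c₁, c₂ are complex numbers with |c₁| ≤ 1 and |c₂| ≤ 1 − |c₁|². Define a₃ = (2γ/(2−α))c₂ + (2(3−α)γ²/((1−α)²(2−α)))c₁². Then |a₃| ≤ 2γ/(2−α) if γ ≤ (1−α)²/(3−α), and |a₃| ≤ 2(3−α)γ²/((1−α)²(2−α)) if (1−α)²/(3−α) ≤ γ ≤ 1. -/
/-!
By the triangle inequality `‖a₃‖ ≤ A ‖c₂‖ + B ‖c₁‖² ≤ A (1 - ‖c₁‖²) + B ‖c₁‖²`, a convex combination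
of the two weights `A = 2γ/(2-α)` and `B = 2(3-α)γ²/((1-α)²(2-α))`, hence at most `max A B`.
Since `B = A · γ(3-α)/(1-α)²`, the larger weight is `A` exactly when `γ ≤ (1-α)²/(3-α)`.
-/

theorem RCLike.norm_ofReal_mul_add_ofReal_mul_sq_le_max {𝕜 : Type*} [RCLike 𝕜] {A B : ℝ}
    (hA : 0 ≤ A) (hB : 0 ≤ B) {z w : 𝕜} (hw : ‖w‖ ≤ 1 - ‖z‖ ^ 2) :
    ‖(A : 𝕜) * w + (B : 𝕜) * z ^ 2‖ ≤ max A B := by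
  have hz : 0 ≤ 1 - ‖z‖ ^ 2 := (norm_nonneg w).trans hw
  calc ‖(A : 𝕜) * w + (B : 𝕜) * z ^ 2‖ ≤ A * ‖w‖ + B * ‖z‖ ^ 2 := by
        refine (norm_add_le _ _).trans_eq ?_
        simp only [norm_mul, norm_pow, RCLike.norm_ofReal, abs_of_nonneg hA, abs_of_nonneg hB]
    _ ≤ A * (1 - ‖z‖ ^ 2) + B * ‖z‖ ^ 2 := by gcongr
    _ ≤ max A B * (1 - ‖z‖ ^ 2) + max A B * ‖z‖ ^ 2 := by
        gcongr
        exacts [le_max_left A B, le_max_right A B]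
    _ = max A B := by ring

theorem third_coeff_bound_general (α γ : ℝ) (hα1 : α < 1)
    (hγ0 : 0 < γ)
    (c₁ c₂ : ℂ) (hc2 : ‖c₂‖ ≤ 1 - ‖c₁‖ ^ 2)
    (a₃ : ℂ)
    (ha : a₃ = (2 * γ / (2 - α) : ℝ) * c₂ +
      (2 * (3 - α) * γ ^ 2 / ((1 - α) ^ 2 * (2 - α)) : ℝ) * c₁ ^ 2) :
    (γ ≤ (1 - α) ^ 2 / (3 - α) → ‖a₃‖ ≤ 2 * γ / (2 - α)) ∧
    ((1 - α) ^ 2 / (3 - α) ≤ γ → ‖a₃‖ ≤ 2 * (3 - α) * γ ^ 2 / ((1 - α) ^ 2 * (2 - α))) := by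
  have h1 : 0 < 1 - α := by linarith
  have h2 : 0 < 2 - α := by linarith
  have h3 : 0 < 3 - α := by linarith
  set A := 2 * γ / (2 - α)
  set B := 2 * (3 - α) * γ ^ 2 / ((1 - α) ^ 2 * (2 - α))
  have hA : 0 ≤ A := by positivity
  have hBA : B = A * (γ * (3 - α) / (1 - α) ^ 2) := by
    simp only [A, B]
    field_simp
  have hB : 0 ≤ B := by positivity
  have hbound : ‖a₃‖ ≤ max A B := ha ▸ RCLike.norm_ofReal_mul_add_ofReal_mul_sq_le_max hA hB hc2
  refine ⟨fun hγ => hbound.trans_eq (max_eq_left ?_), fun hγ => hbound.trans_eq (max_eq_right ?_)⟩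
  · rw [le_div_iff₀ h3] at hγ
    rw [hBA]
    exact mul_le_of_le_one_right hA ((div_le_one (by positivity)).2 hγ)
  · rw [div_le_iff₀ h3] at hγ
    rw [hBA]
    exact le_mul_of_one_le_right hA ((one_le_div (by positivity)).2 hγ)

theorem third_coeff_bound (α γ : ℝ) (hα0 : 0 < α) (hα1 : α < 1)
    (hγ0 : 0 < γ) (hγ1 : γ ≤ 1)
    (c₁ c₂ : ℂ) (hc1 : ‖c₁‖ ≤ 1) (hc2 : ‖c₂‖ ≤ 1 - ‖c₁‖ ^ 2)
    (a₃ : ℂ)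
    (ha : a₃ = (2 * γ / (2 - α) : ℝ) * c₂ +
      (2 * (3 - α) * γ ^ 2 / ((1 - α) ^ 2 * (2 - α)) : ℝ) * c₁ ^ 2) :
    (γ ≤ (1 - α) ^ 2 / (3 - α) → ‖a₃‖ ≤ 2 * γ / (2 - α)) ∧
    ((1 - α) ^ 2 / (3 - α) ≤ γ → ‖a₃‖ ≤ 2 * (3 - α) * γ ^ 2 / ((1 - α) ^ 2 * (2 - α))) :=
  third_coeff_bound_general α γ hα1 hγ0 c₁ c₂ hc2 a₃ ha
end
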